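/- arXiv:1312.1554 — 3 statements merged into one kernel-verified Lean document; each statement's English description precedes it below -/
import Mathlib

section
/- For every positive integer n, 2 * sum_{k=1}^n (1/k) * C(n,k) / C(n+k,k) * ((-1)^k * H_{k-1}(2) - H_{k-1}(-2)) = sum_{1<=j<k<=n} 1/(j^2 * (2k-1)), where H_{k-1}(2) = sum_{j=1}^{k-1} 1/j^2 and H_{k-1}(-2) = sum_{j=1}^{k-1} (-1)^j/j^2. -/
open Finset

noncomputable def cc (n k : ℕ) : ℚ := (n.choose k : ℚ) / ((n + k).choose k : ℚ)

lemma cc_eq {n k : ℕ} (h : k ≤ n) :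
    cc n k = (n.factorial : ℚ)^2 / ((n-k).factorial * (n+k).factorial) := by
  have h2 : k ≤ n + k := Nat.le_add_left k n
  rw [cc, Nat.cast_choose ℚ h, Nat.cast_choose ℚ h2, Nat.add_sub_cancel]
  have f1 : (k.factorial : ℚ) ≠ 0 := by exact_mod_cast k.factorial_ne_zero
  have f2 : ((n-k).factorial : ℚ) ≠ 0 := by exact_mod_cast (n-k).factorial_ne_zero
  have f3 : ((n+k).factorial : ℚ) ≠ 0 := by exact_mod_cast (n+k).factorial_ne_zero
  have f4 : (n.factorial : ℚ) ≠ 0 := by exact_mod_cast n.factorial_ne_zero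
  field_simp

lemma cc_zero (n : ℕ) : cc n 0 = 1 := by simp [cc]

lemma cc_of_lt {n k : ℕ} (h : n < k) : cc n k = 0 := by
  simp [cc, Nat.choose_eq_zero_of_lt h]

lemma cc_one (n : ℕ) : cc n 1 = n / ((n:ℚ)+1) := by
  simp [cc, Nat.choose_one_right]

lemma r1 (n k : ℕ) (hk : 1 ≤ k) :
    ((n:ℚ)+k) * cc n k = ((n:ℚ)+1-k) * cc n (k-1) := by
  obtain ⟨j, rfl⟩ : ∃ j, k = j + 1 := ⟨k-1, by omega⟩
  simp only [Nat.add_sub_cancel]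
  rcases le_or_gt (j+1) n with h | h
  · obtain ⟨m, rfl⟩ : ∃ m, n = m + (j+1) := ⟨n - (j+1), by omega⟩
    rw [cc_eq h, cc_eq (by omega : j ≤ m + (j+1))]
    have e1 : m + (j+1) - (j+1) = m := by omega
    have e2 : m + (j+1) - j = m + 1 := by omega
    have e3 : m + (j+1) + (j+1) = (m + (j+1) + j) + 1 := by omega
    rw [e1, e2, e3, Nat.factorial_succ (m + (j+1) + j), Nat.factorial_succ m]
    have f2 : ((m).factorial : ℚ) ≠ 0 := by exact_mod_cast (m).factorial_ne_zero
    have f3 : ((m+(j+1)+j).factorial : ℚ) ≠ 0 := by exact_mod_cast (m+(j+1)+j).factorial_ne_zero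
    push_cast
    field_simp
    ring
  · rw [cc_of_lt h]
    rcases eq_or_lt_of_le (by omega : n ≤ j) with h2 | h2
    · subst h2; push_cast; ring
    · rw [cc_of_lt h2]; ring

lemma r2 (n k : ℕ) (hn : 1 ≤ n) (hk : k ≤ n) :
    (n:ℚ)^2 * cc (n-1) k = ((n:ℚ)^2 - k^2) * cc n k := by
  rcases eq_or_lt_of_le hk with h | h
  · subst h
    rw [cc_of_lt (by omega : k - 1 < k)]
    ring
  · obtain ⟨m, rfl⟩ : ∃ m, n = m + 1 := ⟨n-1, by omega⟩
    have hkm : k ≤ m := by omega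
    simp only [Nat.add_sub_cancel]
    obtain ⟨t, rfl⟩ : ∃ t, m = k + t := ⟨m - k, by omega⟩
    rw [cc_eq hkm, cc_eq (by omega : k ≤ k + t + 1)]
    have e1 : k + t - k = t := by omega
    have e2 : k + t + 1 - k = t + 1 := by omega
    have e3 : k + t + 1 + k = (k + t + k) + 1 := by omega
    rw [e1, e2, e3, Nat.factorial_succ (k+t+k), Nat.factorial_succ t, Nat.factorial_succ (k+t)]
    have f1 : ((t).factorial : ℚ) ≠ 0 := by exact_mod_cast (t).factorial_ne_zero
    have f2 : ((k+t+k).factorial : ℚ) ≠ 0 := by exact_mod_cast (k+t+k).factorial_ne_zero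
    have f3 : ((k+t).factorial : ℚ) ≠ 0 := by exact_mod_cast (k+t).factorial_ne_zero
    push_cast
    field_simp
    ring

lemma two_n_sub_one_ne (n : ℕ) : (2*(n:ℚ)-1) ≠ 0 := by
  intro h
  have h2 : ((2*n : ℕ) : ℚ) = ((1:ℕ):ℚ) := by push_cast; linarith
  rw [Nat.cast_inj] at h2
  omega

lemma qhead (n j : ℕ) :
    ∑ k ∈ Icc 1 j, (k:ℚ) * cc n k = (n:ℚ)/2 - ((n:ℚ)+j+1) * cc n (j+1) / 2 := by
  induction j with
  | zero =>
    rw [show Icc 1 0 = (∅ : Finset ℕ) by rfl]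
    simp only [sum_empty, Nat.cast_zero, add_zero, zero_add, cc_one]
    rcases Nat.eq_zero_or_pos n with h | h
    · simp [h]
    · have h1 : ((n:ℚ)+1) ≠ 0 := by positivity
      field_simp; ring
  | succ j ih =>
    rw [Finset.sum_Icc_succ_top (by omega), ih]
    simp only [show j+1+1 = j+2 from rfl]
    have key := r1 n (j+2) (by omega)
    simp only [show j+2-1 = j+1 from rfl] at key
    push_cast at key ⊢
    linarith [key]

lemma phead (n j : ℕ) :
    ∑ k ∈ Icc 1 j, (-1:ℚ)^k * k * cc n k
      = -(n:ℚ)/(2*(2*n-1)) + (-1:ℚ)^j * cc n (j+1) * (2*j+1)*((n:ℚ)+j+1)/(2*(2*n-1)) := by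
  have hd : (2*(n:ℚ)-1) ≠ 0 := two_n_sub_one_ne n
  induction j with
  | zero =>
    rw [show Icc 1 0 = (∅ : Finset ℕ) by rfl]
    simp only [sum_empty, Nat.cast_zero, add_zero, zero_add, pow_zero, one_mul, cc_one]
    rcases Nat.eq_zero_or_pos n with h | h
    · simp [h]
    · have h1 : ((n:ℚ)+1) ≠ 0 := by positivity
      field_simp; ring
  | succ j ih =>
    rw [Finset.sum_Icc_succ_top (by omega), ih]
    simp only [show j+1+1 = j+2 from rfl]
    have key := r1 n (j+2) (by omega)
    simp only [show j+2-1 = j+1 from rfl] at key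
    push_cast at key ⊢
    have hd' : (n:ℚ)*2-1 ≠ 0 := by rwa [mul_comm] at hd
    field_simp
    linear_combination ((-1:ℚ)^j * (2*(j:ℚ)+3)) * key

lemma s4head (m J : ℕ) (hm : 1 ≤ m) :
    ∑ j ∈ Icc 1 J, (-1:ℚ)^(j+1) * cc m j
      = 1/2 + (-1:ℚ)^(J+1) * cc m J * ((m:ℚ)-J)/(2*m) := by
  have hm0 : ((m:ℚ)) ≠ 0 := by positivity
  induction J with
  | zero =>
    rw [show Icc 1 0 = (∅ : Finset ℕ) by rfl]
    simp only [sum_empty, Nat.cast_zero, sub_zero, cc_zero, pow_one, mul_one, neg_mul, one_mul]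
    field_simp; norm_num
  | succ J ih =>
    rw [Finset.sum_Icc_succ_top (by omega), ih]
    have key := r1 m (J+1) (by omega)
    simp only [show J+1-1 = J from rfl] at key
    push_cast at key ⊢
    field_simp
    linear_combination ((-1:ℚ)^J) * key

lemma s4 (m : ℕ) (hm : 1 ≤ m) :
    ∑ j ∈ Icc 1 m, (-1:ℚ)^(j+1) * cc m j = 1/2 := by
  rw [s4head m m hm]
  simp

lemma s3 (m : ℕ) :
    ∑ j ∈ Icc 1 m, (-1:ℚ)^(j+1) * cc m j / (j:ℚ)^2
      = (1/2) * ∑ j ∈ Icc 1 m, (1:ℚ)/(j:ℚ)^2 := by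
  induction m with
  | zero => simp
  | succ m ih =>
    have hm1 : ((m:ℚ)+1) ≠ 0 := by positivity
    have hpt : ∀ j ∈ Icc 1 (m+1),
        (-1:ℚ)^(j+1) * cc (m+1) j / (j:ℚ)^2
          = (-1:ℚ)^(j+1) * cc m j / (j:ℚ)^2
            + ((-1:ℚ)^(j+1) * cc (m+1) j) / ((m:ℚ)+1)^2 := by
      intro j hj
      simp only [mem_Icc] at hj
      have key := r2 (m+1) j (by omega) hj.2
      simp only [show m+1-1 = m from rfl] at key
      have hj0 : ((j:ℚ)) ≠ 0 := by
        have : 0 < j := hj.1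
        positivity
      push_cast at key ⊢
      field_simp
      linear_combination (-1) * key
    rw [Finset.sum_congr rfl hpt, Finset.sum_add_distrib]
    have e1 : ∑ j ∈ Icc 1 (m+1), (-1:ℚ)^(j+1) * cc m j / (j:ℚ)^2
        = ∑ j ∈ Icc 1 m, (-1:ℚ)^(j+1) * cc m j / (j:ℚ)^2 := by
      rw [Finset.sum_Icc_succ_top (by omega)]
      rw [cc_of_lt (by omega : m < m+1)]
      simp
    have e2 : ∑ j ∈ Icc 1 (m+1), ((-1:ℚ)^(j+1) * cc (m+1) j) / ((m:ℚ)+1)^2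
        = (1/2) / ((m:ℚ)+1)^2 := by
      rw [← Finset.sum_div]
      rw [show ∑ j ∈ Icc 1 (m+1), (-1:ℚ)^(j+1) * cc (m+1) j = 1/2 from by
        have := s4 (m+1) (by omega); push_cast at this ⊢; convert this using 2]
    rw [e1, e2, ih, Finset.sum_Icc_succ_top (by omega : 1 ≤ m+1)]
    push_cast
    field_simp

noncomputable def A (k : ℕ) : ℚ :=
  (-1:ℚ)^k * (∑ j ∈ Icc 1 (k-1), (1:ℚ)/(j:ℚ)^2) - ∑ j ∈ Icc 1 (k-1), (-1:ℚ)^j/(j:ℚ)^2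

lemma tailsum (n j : ℕ) (hj : j ≤ n) (hj1 : 1 ≤ j) :
    ∑ k ∈ Ioc j n, ((-1:ℚ)^k - (-1:ℚ)^j) * k * cc n k
      = (-1:ℚ)^(j+1) * ((n:ℚ)^2 - (j:ℚ)^2) * cc n j / (2*(n:ℚ)-1) := by
  have hd := two_n_sub_one_ne n
  have hsplit : ∀ g : ℕ → ℚ, ∑ k ∈ Ioc j n, g k = ∑ k ∈ Icc 1 n, g k - ∑ k ∈ Icc 1 j, g k := by
    intro g
    have h := Finset.sum_Ioc_consecutive g (Nat.zero_le j) hj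
    rw [← Finset.Icc_add_one_left_eq_Ioc 0 n, ← Finset.Icc_add_one_left_eq_Ioc 0 j, zero_add] at h
    linarith
  have e1 : ∑ k ∈ Ioc j n, ((-1:ℚ)^k - (-1:ℚ)^j) * k * cc n k
      = ∑ k ∈ Ioc j n, ((-1:ℚ)^k * k * cc n k) - (-1:ℚ)^j * ∑ k ∈ Ioc j n, ((k:ℚ) * cc n k) := by
    rw [Finset.mul_sum, ← Finset.sum_sub_distrib]
    apply Finset.sum_congr rfl
    intro k _
    ring
  rw [e1, hsplit (fun k => (-1:ℚ)^k * k * cc n k), hsplit (fun k => (k:ℚ) * cc n k),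
    phead n n, phead n j, qhead n n, qhead n j, cc_of_lt (by omega : n < n+1)]
  have key := r1 n (j+1) (by omega)
  simp only [show j+1-1 = j from rfl] at key
  push_cast at key ⊢
  have hd' : (n:ℚ)*2-1 ≠ 0 := by rwa [mul_comm] at hd
  field_simp
  linear_combination (-2*(-1:ℚ)^j * ((n:ℚ)+j)) * key

lemma s2 (m : ℕ) :
    ∑ k ∈ Icc 1 (m+1), (k:ℚ) * cc (m+1) k * A k
      = ((m:ℚ)+1)^2/(2*(2*((m:ℚ)+1)-1)) * ∑ j ∈ Icc 1 m, (1:ℚ)/(j:ℚ)^2 := by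
  have hd := two_n_sub_one_ne (m+1)
  push_cast at hd
  have e1 : ∀ k ∈ Icc 1 (m+1), (k:ℚ) * cc (m+1) k * A k
      = ∑ j ∈ Icc 1 (k-1), ((-1:ℚ)^k - (-1:ℚ)^j) * k * cc (m+1) k / (j:ℚ)^2 := by
    intro k hk
    rw [A, Finset.mul_sum, ← Finset.sum_sub_distrib, Finset.mul_sum]
    apply Finset.sum_congr rfl
    intro x _
    ring
  rw [Finset.sum_congr rfl e1]
  rw [Finset.sum_comm' (t' := Icc 1 m) (s' := fun j => Icc (j+1) (m+1))
    (by intro k j; simp only [mem_Icc]; omega)]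
  have e2 : ∀ j ∈ Icc 1 m,
      ∑ k ∈ Icc (j+1) (m+1), ((-1:ℚ)^k - (-1:ℚ)^j) * k * cc (m+1) k / (j:ℚ)^2
        = ((m:ℚ)+1)^2/(2*((m:ℚ)+1)-1) * ((-1:ℚ)^(j+1) * cc m j / (j:ℚ)^2) := by
    intro j hj
    simp only [mem_Icc] at hj
    rw [← Finset.sum_div, Finset.Icc_add_one_left_eq_Ioc j (m+1),
      tailsum (m+1) j (by omega) hj.1]
    have key2 := r2 (m+1) j (by omega) (by omega : j ≤ m+1)
    simp only [show m+1-1 = m from rfl] at key2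
    have hj0 : ((j:ℚ)) ≠ 0 := by
      have : 0 < j := hj.1
      positivity
    push_cast at key2 ⊢
    have hd' : (1:ℚ)+(m:ℚ)*2 ≠ 0 := by positivity
    have hd'' : (m:ℚ)*2+1 ≠ 0 := by positivity
    field_simp
    linear_combination (-(1+(m:ℚ)*2)⁻¹) * key2
  rw [Finset.sum_congr rfl e2, ← Finset.mul_sum, s3 m]
  generalize (∑ j ∈ Icc 1 m, (1:ℚ)/(j:ℚ)^2) = S
  have hd2 : (2*(2*((m:ℚ)+1)-1)) ≠ 0 := by intro h; apply hd; linarith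
  rw [div_mul_eq_mul_div, show ((m:ℚ)+1)^2/(2*(2*((m:ℚ)+1)-1)) * S = ((m:ℚ)+1)^2 * S / (2*(2*((m:ℚ)+1)-1)) from by ring, div_eq_div_iff hd hd2]
  ring

theorem stmt_13 (n : ℕ) (hn : 1 ≤ n) :
    2 * ∑ k ∈ Finset.Icc 1 n, (1 / (k : ℚ)) * ((n.choose k : ℚ) / ((n + k).choose k)) *
      ((-1 : ℚ) ^ k * (∑ j ∈ Finset.Icc 1 (k - 1), (1 : ℚ) / (j : ℚ) ^ 2) -
        ∑ j ∈ Finset.Icc 1 (k - 1), (-1 : ℚ) ^ j / (j : ℚ) ^ 2) =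
    ∑ k ∈ Finset.Icc 1 n, ∑ j ∈ Finset.Icc 1 (k - 1), (1 : ℚ) / ((j : ℚ) ^ 2 * (2 * k - 1)) := by
  induction n, hn using Nat.le_induction with
  | base => simp
  | succ n hn ih =>
    show 2 * ∑ k ∈ Icc 1 (n+1), (1/(k:ℚ)) * cc (n+1) k * A k
        = ∑ k ∈ Icc 1 (n+1), ∑ j ∈ Icc 1 (k-1), (1:ℚ)/((j:ℚ)^2 * (2*(k:ℚ)-1))
    replace ih : 2 * ∑ k ∈ Icc 1 n, (1/(k:ℚ)) * cc n k * A k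
        = ∑ k ∈ Icc 1 n, ∑ j ∈ Icc 1 (k-1), (1:ℚ)/((j:ℚ)^2 * (2*(k:ℚ)-1)) := ih
    have hn1 : ((n:ℚ)+1) ≠ 0 := by positivity
    have hd : (2*((n:ℚ)+1)-1) ≠ 0 := by
      intro h
      have h2 : ((2*n+1 : ℕ) : ℚ) = ((0:ℕ):ℚ) := by push_cast; linarith
      rw [Nat.cast_inj] at h2
      omega
    have hsplit : ∀ k ∈ Icc 1 (n+1), (1/(k:ℚ)) * cc (n+1) k * A k
        = (1/(k:ℚ)) * cc n k * A k + (1/((n:ℚ)+1)^2) * ((k:ℚ) * cc (n+1) k * A k) := by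
      intro k hk
      simp only [mem_Icc] at hk
      have key := r2 (n+1) k (by omega) hk.2
      simp only [show n+1-1 = n from rfl] at key
      have hk0 : ((k:ℚ)) ≠ 0 := by
        have : 0 < k := hk.1
        positivity
      push_cast at key ⊢
      field_simp
      linear_combination (-(A k)) * key
    rw [Finset.sum_congr rfl hsplit, Finset.sum_add_distrib, mul_add]
    have h1 : ∑ k ∈ Icc 1 (n+1), (1/(k:ℚ)) * cc n k * A k
        = ∑ k ∈ Icc 1 n, (1/(k:ℚ)) * cc n k * A k := by
      rw [Finset.sum_Icc_succ_top (by omega), cc_of_lt (by omega : n < n+1)]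
      ring
    have h2 : ∑ k ∈ Icc 1 (n+1), (1/((n:ℚ)+1)^2) * ((k:ℚ) * cc (n+1) k * A k)
        = (1/((n:ℚ)+1)^2) * ∑ k ∈ Icc 1 (n+1), ((k:ℚ) * cc (n+1) k * A k) := by
      rw [Finset.mul_sum]
    rw [h1, h2, s2 n, Finset.sum_Icc_succ_top (by omega : 1 ≤ n+1)
      (f := fun k => ∑ j ∈ Icc 1 (k-1), (1:ℚ)/((j:ℚ)^2 * (2*(k:ℚ)-1)))]
    simp only [show n+1-1 = n from rfl]
    rw [mul_add, ih]
    have h3 : ∑ j ∈ Icc 1 n, (1:ℚ)/((j:ℚ)^2 * (2*((n+1 : ℕ):ℚ)-1))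
        = (1/(2*((n:ℚ)+1)-1)) * ∑ j ∈ Icc 1 n, (1:ℚ)/(j:ℚ)^2 := by
      rw [Finset.mul_sum]
      apply Finset.sum_congr rfl
      intro j hj
      simp only [mem_Icc] at hj
      have hj0 : ((j:ℚ)) ≠ 0 := by
        have : 0 < j := hj.1
        positivity
      push_cast
      field_simp
    rw [h3]
    generalize (∑ j ∈ Icc 1 n, (1:ℚ)/(j:ℚ)^2) = S
    generalize (∑ k ∈ Icc 1 n, ∑ j ∈ Icc 1 (k-1), (1:ℚ)/((j:ℚ)^2 * (2*(k:ℚ)-1))) = T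
    have hd2 : (2*(2*((n:ℚ)+1)-1)) ≠ 0 := by intro h; apply hd; linarith
    have last : 2 * ((1:ℚ)/((n:ℚ)+1)^2 * (((n:ℚ)+1)^2/(2*(2*((n:ℚ)+1)-1)) * S)) = 1/(2*((n:ℚ)+1)-1) * S := by
      field_simp
    ring_nf at last ⊢
    linarith [last]
end

section
/- Let m, n, r be positive integers with n + r odd and m even. Then for every prime p > max(m,n) + 1, the sum over k from 1 to p-1 of (H_{k-1}(m) - (-1)^k * H_{k-1}(-m)) * (H_k(n) + H_{k-1}(n)) / k^r is congruent to 0 modulo p (as an element of Z/p, interpreting the rational sum via inverses mod p; all denominators are coprime to p). -/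
open Finset

section zmodaux

lemma zmodaux_sum_univ (p : ℕ) [Fact p.Prime] (g : ZMod p → ZMod p) :
    ∑ x : ZMod p, g x = ∑ i ∈ Finset.range p, g (i : ℕ) := by
  refine (Finset.sum_nbij' (fun i : ℕ => (i : ZMod p)) (fun x : ZMod p => x.val)
    ?_ ?_ ?_ ?_ ?_).symm
  · intro i _; exact Finset.mem_univ _
  · intro x _; exact Finset.mem_range.mpr (ZMod.val_lt x)
  · intro i hi; exact ZMod.val_cast_of_lt (Finset.mem_range.mp hi)
  · intro x _; exact ZMod.natCast_zmod_val x
  · intro i _; rfl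

lemma zmodaux_cast (p : ℕ) [Fact p.Prime] {i : ℕ} (hi : i ≤ p) :
    ((p - i : ℕ) : ZMod p) = -(i : ZMod p) := by
  rw [Nat.cast_sub hi, ZMod.natCast_self, zero_sub]

lemma zmodaux_sq (p : ℕ) (i : ℕ) : (-1 : ZMod p) ^ i * (-1 : ZMod p) ^ i = 1 := by
  rw [← pow_add, ← two_mul, pow_mul, neg_one_sq, one_pow]

lemma zmodaux_sign (p : ℕ) (hodd : Odd p) {i : ℕ} (hi : i ≤ p) :
    (-1 : ZMod p) ^ (p - i) = -(-1 : ZMod p) ^ i := by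
  have h1 : (-1 : ZMod p) ^ (p - i) * (-1 : ZMod p) ^ i = -1 := by
    rw [← pow_add, Nat.sub_add_cancel hi, hodd.neg_one_pow]
  calc (-1 : ZMod p) ^ (p - i)
      = (-1 : ZMod p) ^ (p - i) * ((-1 : ZMod p) ^ i * (-1 : ZMod p) ^ i) := by
        rw [zmodaux_sq, mul_one]
    _ = ((-1 : ZMod p) ^ (p - i) * (-1 : ZMod p) ^ i) * (-1 : ZMod p) ^ i := by ring
    _ = -(-1 : ZMod p) ^ i := by rw [h1]; ring

lemma zmodaux_inv_neg_pow (p : ℕ) [Fact p.Prime] (x : ZMod p) (a : ℕ) :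
    ((-x) ^ a)⁻¹ = (-1 : ZMod p) ^ a * (x ^ a)⁻¹ := by
  rw [neg_pow, mul_inv]
  congr 1
  rw [← inv_pow]
  norm_num

lemma zmodaux_eq_zero (p : ℕ) [Fact p.Prime] (hp2 : 2 < p) (x : ZMod p) (h : x = -x) :
    x = 0 := by
  have h2 : (2 : ZMod p) ≠ 0 := by
    intro hc
    have h0 : ((2 : ℕ) : ZMod p) = 0 := by exact_mod_cast hc
    rw [ZMod.natCast_eq_zero_iff] at h0
    have := Nat.le_of_dvd (by norm_num) h0
    omega
  have hx : (2 : ZMod p) * x = 0 := by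
    rw [two_mul]; nth_rewrite 1 [h]; ring
  rcases mul_eq_zero.mp hx with h' | h'
  · exact absurd h' h2
  · exact h'

lemma zmodaux_full (p : ℕ) [hp : Fact p.Prime] (a : ℕ) (ha : 1 ≤ a) (ha' : a < p - 1) :
    ∑ j ∈ Icc 1 (p - 1), ((j : ZMod p) ^ a)⁻¹ = 0 := by
  have hp1 : 1 ≤ p := hp.out.one_lt.le
  have key : ∀ j ∈ Icc 1 (p - 1), ((j : ZMod p) ^ a)⁻¹ = (j : ZMod p) ^ (p - 1 - a) := by
    intro j hj
    obtain ⟨hj1, hj2⟩ := Finset.mem_Icc.mp hj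
    have hjne : (j : ZMod p) ≠ 0 := by
      rw [Ne, ZMod.natCast_eq_zero_iff]
      intro hdvd
      have := Nat.le_of_dvd (by omega) hdvd
      omega
    have h1 : (j : ZMod p) ^ (p - 1 - a) * (j : ZMod p) ^ a = 1 := by
      rw [← pow_add]
      have : p - 1 - a + a = p - 1 := by omega
      rw [this, ZMod.pow_card_sub_one_eq_one hjne]
    exact inv_eq_of_mul_eq_one_left h1
  rw [Finset.sum_congr rfl key]
  have hrange : ∑ j ∈ Icc 1 (p - 1), (j : ZMod p) ^ (p - 1 - a)
      = ∑ j ∈ Finset.range p, (j : ZMod p) ^ (p - 1 - a) := by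
    have h0 : Finset.range p = insert 0 (Icc 1 (p - 1)) := by
      ext y
      simp only [Finset.mem_range, Finset.mem_insert, Finset.mem_Icc]
      omega
    rw [h0, Finset.sum_insert (by simp)]
    simp [zero_pow (by omega : p - 1 - a ≠ 0)]
  rw [hrange, ← zmodaux_sum_univ p (fun x => x ^ (p - 1 - a))]
  exact FiniteField.sum_pow_lt_card_sub_one (ZMod p) _
    (by simpa [ZMod.card] using (by omega : p - 1 - a < p - 1))

lemma zmodaux_refl (p : ℕ) (hp1 : 1 ≤ p) (g : ℕ → ZMod p) (t : ℕ) (ht : t ≤ p - 1) :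
    ∑ j ∈ Icc 1 (p - 1 - t), g j
      = (∑ j ∈ Icc 1 (p - 1), g j) - ∑ i ∈ Icc 1 t, g (p - i) := by
  have hIcc : ∀ x : ℕ, Icc 1 x = Ioc 0 x := by
    intro x; ext y; simp only [Finset.mem_Icc, Finset.mem_Ioc]; omega
  have h1 : (∑ j ∈ Ioc 0 (p - 1 - t), g j) + ∑ j ∈ Ioc (p - 1 - t) (p - 1), g j
      = ∑ j ∈ Ioc 0 (p - 1), g j :=
    Finset.sum_Ioc_consecutive _ (by omega) (by omega)
  have h2 : ∑ j ∈ Ioc (p - 1 - t) (p - 1), g j = ∑ i ∈ Icc 1 t, g (p - i) := by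
    refine Finset.sum_nbij' (fun j => p - j) (fun i => p - i) ?_ ?_ ?_ ?_ ?_
    · intro a ha; simp only [Finset.mem_Ioc] at ha; simp only [Finset.mem_Icc]; omega
    · intro a ha; simp only [Finset.mem_Icc] at ha; simp only [Finset.mem_Ioc]; omega
    · intro a ha; simp only [Finset.mem_Ioc] at ha; omega
    · intro a ha; simp only [Finset.mem_Icc] at ha; omega
    · intro a ha
      simp only [Finset.mem_Ioc] at ha
      congr 1
      omega
  rw [hIcc, hIcc, ← h1, h2]
  ring

lemma zmodaux_alt_full (p : ℕ) [hp : Fact p.Prime] (hp2 : 2 < p) (a : ℕ) (hae : Even a) :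
    ∑ j ∈ Icc 1 (p - 1), (-1 : ZMod p) ^ j * ((j : ZMod p) ^ a)⁻¹ = 0 := by
  have hodd : Odd p := hp.out.odd_of_ne_two (by omega)
  have key : ∑ j ∈ Icc 1 (p - 1), (-1 : ZMod p) ^ j * ((j : ZMod p) ^ a)⁻¹
      = ∑ j ∈ Icc 1 (p - 1), -((-1 : ZMod p) ^ j * ((j : ZMod p) ^ a)⁻¹) := by
    refine Finset.sum_nbij' (fun j => p - j) (fun j => p - j) ?_ ?_ ?_ ?_ ?_
    · intro j hj; simp only [Finset.mem_Icc] at hj ⊢; omega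
    · intro j hj; simp only [Finset.mem_Icc] at hj ⊢; omega
    · intro j hj; simp only [Finset.mem_Icc] at hj; omega
    · intro j hj; simp only [Finset.mem_Icc] at hj; omega
    · intro j hj
      simp only [Finset.mem_Icc] at hj
      have hjp : j ≤ p := by omega
      rw [zmodaux_sign p hodd hjp, zmodaux_cast p hjp, hae.neg_pow]
      ring
  rw [Finset.sum_neg_distrib] at key
  exact zmodaux_eq_zero p hp2 _ key

lemma zmodaux_reflect_sum (p : ℕ) [Fact p.Prime] (hp2 : 2 < p) (f : ℕ → ZMod p)
    (h : ∀ k ∈ Icc 1 (p - 1), f k = -f (p - k)) :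
    ∑ k ∈ Icc 1 (p - 1), f k = 0 := by
  have hS : ∑ k ∈ Icc 1 (p - 1), f k = ∑ k ∈ Icc 1 (p - 1), -f k := by
    refine Finset.sum_nbij' (fun k => p - k) (fun k => p - k) ?_ ?_ ?_ ?_ h
    · intro a ha; simp only [Finset.mem_Icc] at ha ⊢; omega
    · intro a ha; simp only [Finset.mem_Icc] at ha ⊢; omega
    · intro a ha; simp only [Finset.mem_Icc] at ha; omega
    · intro a ha; simp only [Finset.mem_Icc] at ha; omega
  rw [Finset.sum_neg_distrib] at hS
  exact zmodaux_eq_zero p hp2 _ hS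

lemma zmodaux_alg (p : ℕ) [Fact p.Prime] (A T Hk Hk1 c e s vn vr : ZMod p)
    (hs : s * s = 1) (hv : vn * vr = -1) (hvr : vr * vr = 1) :
    (A - s * T) * (Hk + Hk1) / e
      = -((-(A + c) - -s * (T + s * c)) * (-(vn * Hk1) + -(vn * Hk)) / (vr * e)) := by
  rw [div_eq_mul_inv, div_eq_mul_inv, mul_inv, inv_eq_of_mul_eq_one_right hvr]
  linear_combination ((A - s * T) * (Hk + Hk1) * e⁻¹) * hv
    + (-(c * vn * vr * (Hk1 + Hk) * e⁻¹)) * hs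

end zmodaux

theorem stmt_17 (m n r : ℕ) (hm : 1 ≤ m) (hn : 1 ≤ n) (hr : 1 ≤ r)
    (hnr : Odd (n + r)) (hme : Even m)
    (p : ℕ) [hp : Fact p.Prime] (hlarge : max m n + 1 < p) :
    (∑ k ∈ Finset.Icc 1 (p - 1),
      ((∑ j ∈ Finset.Icc 1 (k - 1), ((j : ZMod p) ^ m)⁻¹) -
        (-1 : ZMod p) ^ k * ∑ j ∈ Finset.Icc 1 (k - 1), (-1 : ZMod p) ^ j * ((j : ZMod p) ^ m)⁻¹) *
      ((∑ j ∈ Finset.Icc 1 k, ((j : ZMod p) ^ n)⁻¹) +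
        ∑ j ∈ Finset.Icc 1 (k - 1), ((j : ZMod p) ^ n)⁻¹) /
      (k : ZMod p) ^ r) = 0 := by
  have hp2 : 2 < p := by
    obtain ⟨t, ht⟩ := hme
    have := le_max_left m n
    omega
  have hodd : Odd p := hp.out.odd_of_ne_two (by omega)
  have hm' : m < p - 1 := by have := le_max_left m n; omega
  have hn' : n < p - 1 := by have := le_max_right m n; omega
  have hp1 : 1 ≤ p := by omega
  refine zmodaux_reflect_sum p hp2 _ ?_
  intro k hk
  rw [Finset.mem_Icc] at hk
  obtain ⟨k', rfl⟩ : ∃ k'', k = k'' + 1 := ⟨k - 1, by omega⟩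
  simp only [Nat.add_sub_cancel]
  have hkp : k' + 1 ≤ p := by omega
  -- E1 : sum of inverse m-th powers up to p - (k'+1) - 1
  have E1 : ∑ j ∈ Icc 1 (p - (k' + 1) - 1), ((j : ZMod p) ^ m)⁻¹
      = -((∑ j ∈ Icc 1 k', ((j : ZMod p) ^ m)⁻¹) + (((k' + 1 : ℕ) : ZMod p) ^ m)⁻¹) := by
    rw [show p - (k' + 1) - 1 = p - 1 - (k' + 1) from by omega,
      zmodaux_refl p hp1 _ (k' + 1) (by omega), zmodaux_full p m hm hm']
    have hc : ∑ i ∈ Icc 1 (k' + 1), (((p - i : ℕ) : ZMod p) ^ m)⁻¹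
        = ∑ i ∈ Icc 1 (k' + 1), (((i : ℕ) : ZMod p) ^ m)⁻¹ := by
      refine Finset.sum_congr rfl fun i hi => ?_
      rw [Finset.mem_Icc] at hi
      rw [zmodaux_cast p (by omega : i ≤ p), hme.neg_pow]
    rw [hc, Finset.sum_Icc_succ_top (by omega : 1 ≤ k' + 1)]
    ring
  -- E2 : alternating sum
  have E2 : ∑ j ∈ Icc 1 (p - (k' + 1) - 1), (-1 : ZMod p) ^ j * ((j : ZMod p) ^ m)⁻¹
      = (∑ j ∈ Icc 1 k', (-1 : ZMod p) ^ j * ((j : ZMod p) ^ m)⁻¹)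
        + (-1 : ZMod p) ^ (k' + 1) * (((k' + 1 : ℕ) : ZMod p) ^ m)⁻¹ := by
    rw [show p - (k' + 1) - 1 = p - 1 - (k' + 1) from by omega,
      zmodaux_refl p hp1 _ (k' + 1) (by omega), zmodaux_alt_full p hp2 m hme]
    have hc : ∑ i ∈ Icc 1 (k' + 1), (-1 : ZMod p) ^ (p - i) * (((p - i : ℕ) : ZMod p) ^ m)⁻¹
        = ∑ i ∈ Icc 1 (k' + 1), -((-1 : ZMod p) ^ i * (((i : ℕ) : ZMod p) ^ m)⁻¹) := by
      refine Finset.sum_congr rfl fun i hi => ?_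
      rw [Finset.mem_Icc] at hi
      rw [zmodaux_sign p hodd (by omega : i ≤ p), zmodaux_cast p (by omega : i ≤ p),
        hme.neg_pow]
      ring
    rw [hc, Finset.sum_neg_distrib, Finset.sum_Icc_succ_top (by omega : 1 ≤ k' + 1)]
    ring
  -- E3 : n-th power sum up to p - (k'+1)
  have E3 : ∑ j ∈ Icc 1 (p - (k' + 1)), ((j : ZMod p) ^ n)⁻¹
      = -((-1 : ZMod p) ^ n * ∑ j ∈ Icc 1 k', ((j : ZMod p) ^ n)⁻¹) := by
    rw [show p - (k' + 1) = p - 1 - k' from by omega,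
      zmodaux_refl p hp1 _ k' (by omega), zmodaux_full p n hn hn']
    have hc : ∑ i ∈ Icc 1 k', (((p - i : ℕ) : ZMod p) ^ n)⁻¹
        = ∑ i ∈ Icc 1 k', (-1 : ZMod p) ^ n * (((i : ℕ) : ZMod p) ^ n)⁻¹ := by
      refine Finset.sum_congr rfl fun i hi => ?_
      rw [Finset.mem_Icc] at hi
      rw [zmodaux_cast p (by omega : i ≤ p), zmodaux_inv_neg_pow]
    rw [hc, ← Finset.mul_sum]
    ring
  -- E4 : n-th power sum up to p - (k'+1) - 1
  have E4 : ∑ j ∈ Icc 1 (p - (k' + 1) - 1), ((j : ZMod p) ^ n)⁻¹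
      = -((-1 : ZMod p) ^ n * ∑ j ∈ Icc 1 (k' + 1), ((j : ZMod p) ^ n)⁻¹) := by
    rw [show p - (k' + 1) - 1 = p - 1 - (k' + 1) from by omega,
      zmodaux_refl p hp1 _ (k' + 1) (by omega), zmodaux_full p n hn hn']
    have hc : ∑ i ∈ Icc 1 (k' + 1), (((p - i : ℕ) : ZMod p) ^ n)⁻¹
        = ∑ i ∈ Icc 1 (k' + 1), (-1 : ZMod p) ^ n * (((i : ℕ) : ZMod p) ^ n)⁻¹ := by
      refine Finset.sum_congr rfl fun i hi => ?_
      rw [Finset.mem_Icc] at hi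
      rw [zmodaux_cast p (by omega : i ≤ p), zmodaux_inv_neg_pow]
    rw [hc, ← Finset.mul_sum]
    ring
  have Esign : (-1 : ZMod p) ^ (p - (k' + 1)) = -(-1 : ZMod p) ^ (k' + 1) :=
    zmodaux_sign p hodd hkp
  have Eden : (((p - (k' + 1) : ℕ)) : ZMod p) ^ r
      = (-1 : ZMod p) ^ r * ((k' + 1 : ℕ) : ZMod p) ^ r := by
    rw [zmodaux_cast p hkp, neg_pow]
  rw [E1, E2, E3, E4, Esign, Eden]
  refine zmodaux_alg p _ _ _ _ _ _ _ _ _ (zmodaux_sq p _) ?_ (zmodaux_sq p _)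
  rw [← pow_add]
  exact Odd.neg_one_pow hnr
end

section
/- Let a be a positive integer or a negative even integer, p a prime with p > |a| + 1, and 1 <= k <= p-1. Then H_{p-k}(a) is congruent to -(-1)^a * sgn(a) * H_{k-1}(a) modulo p, where H_n(a) = sum_{j=1}^n sgn(a)^j / j^{|a|}. -/
/-- `H_n(a) = ∑_{j=1}^n sgn(a)^j / j^{|a|}` computed in `ZMod p`. -/
def Hz (p : ℕ) (n : ℕ) (a : ℤ) : ZMod p :=
  ∑ j ∈ Finset.Icc 1 n, (a.sign : ZMod p) ^ j * ((j : ZMod p) ^ a.natAbs)⁻¹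

lemma sumB (p m : ℕ) [Fact p.Prime] (hm : 0 < m) (hmp : m < p - 1) :
    ∑ j ∈ Finset.Icc 1 (p - 1), (((j : ZMod p)) ^ m)⁻¹ = 0 := by
  have hp1 : 1 < p := (Fact.out : p.Prime).one_lt
  have h2 : ∑ j ∈ Finset.Icc 1 (p - 1), (((j : ZMod p)) ^ m)⁻¹
      = ∑ x ∈ (Finset.univ \ {0} : Finset (ZMod p)), (x ^ m)⁻¹ := by
    refine Finset.sum_nbij' (fun j => (j : ZMod p)) (fun x => x.val) ?_ ?_ ?_ ?_ ?_
    · intro j hj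
      simp only [Finset.mem_Icc] at hj
      simp only [Finset.mem_sdiff, Finset.mem_univ, Finset.mem_singleton, true_and]
      intro h
      rw [ZMod.natCast_eq_zero_iff] at h
      have := Nat.le_of_dvd (by omega) h
      omega
    · intro x hx
      simp only [Finset.mem_sdiff, Finset.mem_univ, Finset.mem_singleton, true_and] at hx
      have h0 : x.val ≠ 0 := fun h => hx ((ZMod.val_eq_zero x).mp h)
      have hlt : x.val < p := ZMod.val_lt x
      simp only [Finset.mem_Icc]; omega
    · intro j hj
      simp only [Finset.mem_Icc] at hj
      exact ZMod.val_cast_of_lt (by omega)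
    · intro x _
      exact ZMod.natCast_zmod_val x
    · intro j _; rfl
  have h3 : ∑ x ∈ (Finset.univ \ {0} : Finset (ZMod p)), (x ^ m)⁻¹
      = ∑ x : ZMod p, (x ^ m)⁻¹ := by
    rw [Finset.sum_eq_sum_sdiff_singleton_add (Finset.mem_univ (0 : ZMod p)) (fun x => (x ^ m)⁻¹)]
    rw [zero_pow hm.ne', inv_zero, add_zero]
  have h4 : ∑ x : ZMod p, (x ^ m)⁻¹ = ∑ x : ZMod p, x ^ m := by
    rw [show (fun x : ZMod p => (x ^ m)⁻¹) = fun x : ZMod p => (x⁻¹) ^ m by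
      funext x; rw [inv_pow]]
    exact Fintype.sum_equiv (Function.Involutive.toPerm (·⁻¹) inv_inv) _ _ (fun x => rfl)
  rw [h2, h3, h4]
  exact FiniteField.sum_pow_lt_card_sub_one (ZMod p) m (by rw [ZMod.card]; exact hmp)

theorem stmt_18 (a : ℤ) (ha : 0 < a ∨ (a < 0 ∧ Even a))
    (p : ℕ) [hp : Fact p.Prime] (hpa : a.natAbs + 1 < p)
    (k : ℕ) (hk1 : 1 ≤ k) (hk2 : k ≤ p - 1) :
    Hz p (p - k) a = -(-1 : ZMod p) ^ a * (a.sign : ZMod p) * Hz p (k - 1) a := by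
  have hp1 : 1 < p := hp.out.one_lt
  set m := a.natAbs with hm
  set s : ZMod p := (a.sign : ZMod p) with hs
  have ha0 : a ≠ 0 := by rcases ha with h | ⟨h, _⟩; exacts [h.ne', h.ne]
  have hm0 : 0 < m := Int.natAbs_pos.mpr ha0
  have hmp : m < p - 1 := by omega
  have hsv : s = 1 ∨ s = -1 := by
    rcases ha with h | ⟨h, _⟩
    · left; rw [hs, Int.sign_eq_one_of_pos h, Int.cast_one]
    · right; rw [hs, Int.sign_eq_neg_one_of_neg h]; push_cast; ring
  have hsq : s * s = 1 := by rcases hsv with h | h <;> rw [h] <;> ring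
  -- reindexing lemma
  have hterm : ∀ i : ℕ, 1 ≤ i → i ≤ p →
      s ^ (p - i) * (((p - i : ℕ) : ZMod p) ^ m)⁻¹
        = s ^ p * (-1 : ZMod p) ^ m * (s ^ i * ((i : ZMod p) ^ m)⁻¹) := by
    intro i h1 h2
    have e1 : ((p - i : ℕ) : ZMod p) = -(i : ZMod p) := by
      rw [Nat.cast_sub h2, ZMod.natCast_self, zero_sub]
    have e2 : s ^ (p - i) = s ^ p * s ^ i := by
      calc s ^ (p - i) = s ^ (p - i) * (s * s) ^ i := by rw [hsq, one_pow, mul_one]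
        _ = s ^ (p - i) * s ^ i * s ^ i := by rw [mul_pow, mul_assoc]
        _ = s ^ (p - i + i) * s ^ i := by rw [pow_add]
        _ = s ^ p * s ^ i := by rw [Nat.sub_add_cancel h2]
    have e3 : ((-(i : ZMod p)) ^ m)⁻¹ = (-1 : ZMod p) ^ m * ((i : ZMod p) ^ m)⁻¹ := by
      rw [neg_pow, mul_inv, ← inv_pow, inv_neg, inv_one]
    rw [e1, e2, e3]; ring
  have hre : ∀ c : ℕ, c < p →
      ∑ j ∈ Finset.Icc (p - c) (p - 1), s ^ j * ((j : ZMod p) ^ m)⁻¹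
        = s ^ p * (-1 : ZMod p) ^ m * ∑ i ∈ Finset.Icc 1 c, s ^ i * ((i : ZMod p) ^ m)⁻¹ := by
    intro c hc
    rw [Finset.mul_sum]
    refine (Finset.sum_nbij' (fun i => p - i) (fun j => p - j) ?_ ?_ ?_ ?_ ?_).symm
    · intro i hi; simp only [Finset.mem_Icc] at hi ⊢; omega
    · intro j hj; simp only [Finset.mem_Icc] at hj ⊢; omega
    · intro i hi; simp only [Finset.mem_Icc] at hi; show p - (p - i) = i; omega
    · intro j hj; simp only [Finset.mem_Icc] at hj; show p - (p - j) = j; omega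
    · intro i hi
      simp only [Finset.mem_Icc] at hi
      exact (hterm i hi.1 (by omega)).symm
  -- vanishing of the full sum
  have hT : ∑ j ∈ Finset.Icc 1 (p - 1), s ^ j * ((j : ZMod p) ^ m)⁻¹ = 0 := by
    rcases ha with hpos | ⟨hneg, heven⟩
    · have hs1 : s = 1 := by rw [hs, Int.sign_eq_one_of_pos hpos, Int.cast_one]
      simp only [hs1, one_pow, one_mul]
      exact sumB p m hm0 hmp
    · have hs1 : s = -1 := by rw [hs, Int.sign_eq_neg_one_of_neg hneg]; push_cast; ring
      have hme : Even m := Int.natAbs_even.mpr heven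
      have hodd : Odd p := hp.out.odd_of_ne_two (by omega)
      have h := hre (p - 1) (by omega)
      rw [show p - (p - 1) = 1 by omega] at h
      rw [hs1, hodd.neg_one_pow, hme.neg_one_pow] at h
      have h2 : (2 : ZMod p) ≠ 0 := by
        intro hc
        rw [show (2 : ZMod p) = ((2 : ℕ) : ZMod p) by push_cast; ring,
          ZMod.natCast_eq_zero_iff] at hc
        have := Nat.le_of_dvd (by omega) hc
        omega
      have h2T : 2 * (∑ j ∈ Finset.Icc 1 (p - 1), s ^ j * ((j : ZMod p) ^ m)⁻¹) = 0 := by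
        rw [hs1]
        linear_combination h
      rcases mul_eq_zero.mp h2T with h' | h'
      · exact absurd h' h2
      · exact h'
  -- split the full sum
  have hsplit :
      (∑ j ∈ Finset.Icc 1 (p - k), s ^ j * ((j : ZMod p) ^ m)⁻¹)
        + ∑ j ∈ Finset.Icc (p - (k - 1)) (p - 1), s ^ j * ((j : ZMod p) ^ m)⁻¹
        = ∑ j ∈ Finset.Icc 1 (p - 1), s ^ j * ((j : ZMod p) ^ m)⁻¹ := by
    have e1 : Finset.Icc 1 (p - k) = Finset.Ioc 0 (p - k) := by
      rw [← Finset.Icc_add_one_left_eq_Ioc]; rfl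
    have e2 : Finset.Icc (p - (k - 1)) (p - 1) = Finset.Ioc (p - k) (p - 1) := by
      rw [← Finset.Icc_add_one_left_eq_Ioc]; congr 1; omega
    have e3 : Finset.Icc 1 (p - 1) = Finset.Ioc 0 (p - 1) := by
      rw [← Finset.Icc_add_one_left_eq_Ioc]; rfl
    rw [e1, e2, e3]
    exact Finset.sum_Ioc_consecutive _ (by omega) (by omega)
  have e0 : Hz p (p - k) a + s ^ p * (-1 : ZMod p) ^ m * Hz p (k - 1) a = 0 := by
    rw [Hz, Hz, ← hs, ← hm, ← hre (k - 1) (by omega), hsplit, hT]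
  have hcoef : s ^ p * (-1 : ZMod p) ^ m = (-1 : ZMod p) ^ a * s := by
    rcases ha with hpos | ⟨hneg, heven⟩
    · have hs1 : s = 1 := by rw [hs, Int.sign_eq_one_of_pos hpos, Int.cast_one]
      have hma : a = (m : ℤ) := by rw [hm]; omega
      rw [hs1, hma, zpow_natCast]
      ring
    · have hs1 : s = -1 := by rw [hs, Int.sign_eq_neg_one_of_neg hneg]; push_cast; ring
      have hme : Even m := Int.natAbs_even.mpr heven
      have hodd : Odd p := hp.out.odd_of_ne_two (by omega)
      rw [hs1, hodd.neg_one_pow, hme.neg_one_pow, heven.neg_one_zpow]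
      ring
  rw [hcoef] at e0
  linear_combination e0
end
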